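/- With L, d, D as above, let S ⊆ L with |S| ≥ 2 and x ∉ S. Then D(S ∪ {x}) ≤ D(S) + max_{y ∈ L \ S} min_{l ∈ S} d(y, l). -/

import Mathlib

open Finset

noncomputable def dmin {L : Type*} [DecidableEq L] (d : L → L → ℝ) (x : L) (T : Finset L) : ℝ :=
  sInf ((T.image (d x) : Finset ℝ) : Set ℝ)

noncomputable def aggDiv {L : Type*} [DecidableEq L] (d : L → L → ℝ) (S : Finset L) : ℝ :=
  ∑ l ∈ S, dmin d l (S.erase l)

/-! Adding `x` contributes its own term `dmin d x S`, which is one of the values whose supremum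
is taken, and it can only shrink the other terms, since each `l ∈ S` now takes its minimum over
the larger set `insert x (S.erase l)`. This needs `S.erase l` nonempty, hence `2 ≤ #S`: over the
empty set `dmin` is the junk value `sInf ∅ = 0`. -/

section

variable {L : Type*} [DecidableEq L] (d : L → L → ℝ)

lemma dmin_le_dmin_of_subset (x : L) {T T' : Finset L} (hT : T.Nonempty) (h : T ⊆ T') :
    dmin d x T' ≤ dmin d x T :=
  csInf_le_csInf (T'.image (d x)).finite_toSet.bddBelow (by exact_mod_cast hT.image _)
    (by exact_mod_cast image_subset_image h)

lemma aggDiv_insert {x : L} {S : Finset L} (hx : x ∉ S) :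
    aggDiv d (insert x S) = dmin d x S + ∑ l ∈ S, dmin d l (insert x (S.erase l)) := by
  rw [aggDiv, sum_insert hx, erase_insert hx]
  congr 1
  refine sum_congr rfl fun l hl => ?_
  rw [erase_insert_of_ne (ne_of_mem_of_not_mem hl hx).symm]

lemma aggDiv_insert_le {x : L} {S : Finset L} (hS : 2 ≤ #S) (hx : x ∉ S) :
    aggDiv d (insert x S) ≤ aggDiv d S + dmin d x S := by
  rw [aggDiv_insert d hx, add_comm, aggDiv]
  gcongr with l hl
  refine dmin_le_dmin_of_subset d l ?_ (subset_insert _ _)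
  rw [← card_pos, card_erase_of_mem hl]
  omega

lemma dmin_le_sSup_image_compl [Fintype L] {x : L} {S : Finset L} (hx : x ∉ S) :
    dmin d x S ≤ sSup ((Sᶜ.image (fun y => dmin d y S) : Finset ℝ) : Set ℝ) :=
  le_csSup (Sᶜ.image _).finite_toSet.bddAbove
    (by exact_mod_cast mem_image_of_mem _ (mem_compl.mpr hx))

end

theorem stmt9_general {L : Type*} [Fintype L] [DecidableEq L] (d : L → L → ℝ)
    (S : Finset L) (hS : 2 ≤ S.card) (x : L) (hx : x ∉ S) :
    aggDiv d (insert x S) ≤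
      aggDiv d S + sSup ((Sᶜ.image (fun y => dmin d y S) : Finset ℝ) : Set ℝ) :=
  (aggDiv_insert_le d hS hx).trans (by gcongr; exact dmin_le_sSup_image_compl d hx)

theorem stmt9 {L : Type*} [Fintype L] [DecidableEq L] (d : L → L → ℝ)
    (hsym : ∀ a b, d a b = d b a) (hnn : ∀ a b, 0 ≤ d a b)
    (S : Finset L) (hS : 2 ≤ S.card) (x : L) (hx : x ∉ S) :
    aggDiv d (insert x S) ≤
      aggDiv d S + sSup ((Sᶜ.image (fun y => dmin d y S) : Finset ℝ) : Set ℝ) :=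
  stmt9_general d S hS x hx
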